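/- Let L be a relational coloring language with |R_k| > 1 for infinitely many k ≥ 2, and let W be a set of allowed diagrams such that for every w ∈ W^1 there exist n < ω and w_1, w_2 ∈ W^n with w ⊆ w_1, w ⊆ w_2, and w_1(n) ≠ w_2(n). Then for every infinite cardinal λ, the class K(W) has the amalgamation property for models of size λ if and only if it has the disjoint amalgamation property for models of size λ. -/
import Mathlib


universe u v

open Cardinal

/-- A relational coloring language: a family of pairwise disjoint nonempty sets `R_n`
(`n ≥ 1`) of `n`-ary colors, encoded as a type of colors together with an arity map
whose fibers over `n ≥ 1` are all nonempty. -/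
structure ColoringLanguage : Type (u + 1) where
  Color : Type u
  arity : Color → ℕ
  arity_pos : ∀ r, 1 ≤ arity r
  exists_arity : ∀ n : ℕ, 1 ≤ n → ∃ r, arity r = n

namespace ColoringLanguage

variable (L : ColoringLanguage.{u})

/-- A diagram is (encoded as) a list of colors whose `i`-th entry (0-based) is an
`(i+1)`-ary color; it represents the function `w : [n] → R` with `w(k) ∈ R_k`. -/
def IsDiagram (l : List L.Color) : Prop :=
  ∀ (i : ℕ) (h : i < l.length), L.arity l[i] = i + 1

/-- A set of allowed diagrams: a nonempty set of diagrams closed under restriction to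
initial segments. -/
def IsAllowed (W : Set (List L.Color)) : Prop :=
  W.Nonempty ∧ (∀ l ∈ W, L.IsDiagram l) ∧ ∀ l ∈ W, ∀ m : ℕ, l.take m ∈ W

end ColoringLanguage

/-- `ERge W γ l` says that the existence rank of `l` with respect to `W` is `≥ γ`:
`ER(l;W) ≥ β + 1` iff some one-step extension `l' ∈ W` of `l` has `ER(l';W) ≥ β`,
with the limit (and zero) clauses as usual. -/
noncomputable def ERge {C : Type v} (W : Set (List C)) : Ordinal.{u} → List C → Prop :=
  WellFounded.fix Ordinal.lt_wf fun α IH l =>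
    ∀ β, ∀ h : β < α,
      ∃ l' ∈ W, l'.length = l.length + 1 ∧ l'.take l.length = l ∧ IH β h l'

/-- `prunedW W S` is `W_S`, the set of elements of `W` comparable with some element of `S`. -/
def prunedW {C : Type v} (W S : Set (List C)) : Set (List C) :=
  {w ∈ W | ∃ u ∈ S, w <+: u ∨ u <+: w}

/-- `quotW W wbar` is `W / w̄`: the set of diagrams `w / w̄` for `w ∈ W` extending `w̄`. -/
def quotW {C : Type v} (W : Set (List C)) (wbar : List C) : Set (List C) :=
  (fun l => l.drop wbar.length) '' {l ∈ W | wbar <+: l}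

/-- The beth function with base `κ`: `ℶ_0(κ) = κ`, `ℶ_{α+1}(κ) = 2 ^ ℶ_α(κ)`,
and suprema at limits. -/
noncomputable def bethF (κ : Cardinal.{u}) (o : Ordinal.{u}) : Cardinal.{u} :=
  Ordinal.limitRecOn o κ (fun _ ih => 2 ^ ih)
    fun o' _ ih => ⨆ b : Set.Iio o', ih b.1 b.2

/-- The cardinals `κ_α`: `κ_α = α` for finite `α`, suprema at limits, and
`κ_{β+1} = 2 ^ κ_β` for `β ≥ ω`. -/
noncomputable def kappaC (o : Ordinal.{u}) : Cardinal.{u} :=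
  Ordinal.limitRecOn o 0
    (fun o' ih => if o' < Ordinal.omega0 then ih + 1 else 2 ^ ih)
    fun o' _ ih => ⨆ b : Set.Iio o', ih b.1 b.2

namespace ColoringLanguage

variable (L : ColoringLanguage.{u}) {σ τ : Type u}

/-- `c` is an `L`-coloring of the set `M`: every finite nonempty `A ⊆ M` gets a color
of arity `|A|`. (Values of `c` outside of `M` are irrelevant.) -/
def IsColoring (M : Set σ) (c : Finset σ → L.Color) : Prop :=
  ∀ A : Finset σ, ↑A ⊆ M → A.Nonempty → L.arity (c A) = A.card

/-- `B` is monochromatic for `c`: any two finite nonempty subsets of `B` of equal size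
get the same color. -/
def Mono (c : Finset σ → L.Color) (B : Set σ) : Prop :=
  ∀ A₁ A₂ : Finset σ, ↑A₁ ⊆ B → ↑A₂ ⊆ B → A₁.Nonempty → A₁.card = A₂.card → c A₁ = c A₂

/-- `l` is the diagram of the (monochromatic) finite set `B` under `c`. -/
def DiagramOf (c : Finset σ → L.Color) (B : Finset σ) (l : List L.Color) : Prop :=
  l.length = B.card ∧ ∀ A : Finset σ, A ⊆ B → A.Nonempty → l[A.card - 1]? = some (c A)

/-- `(M,c)` is a member of the coloring class `K(W)`: `c` is an `L`-coloring of `M`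
and every finite nonempty monochromatic subset of `M` has its diagram in `W`. -/
def MemK (W : Set (List L.Color)) (M : Set σ) (c : Finset σ → L.Color) : Prop :=
  L.IsColoring M c ∧
    ∀ B : Finset σ, ↑B ⊆ M → B.Nonempty → L.Mono c ↑B → ∃ l ∈ W, L.DiagramOf c B l

/-- `(M,c)` is a substructure of `(N,c')`. -/
def Substruct (M : Set σ) (c : Finset σ → L.Color) (N : Set σ)
    (c' : Finset σ → L.Color) : Prop :=
  M ⊆ N ∧ ∀ A : Finset σ, ↑A ⊆ M → A.Nonempty → c A = c' A

/-- `f` is an embedding of `(M,c)` into `(N,c')`. -/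
def Emb (f : σ → τ) (M : Set σ) (c : Finset σ → L.Color) (N : Set τ)
    (c' : Finset τ → L.Color) : Prop :=
  Set.InjOn f M ∧ f '' M ⊆ N ∧
    ∀ A : Finset σ, ↑A ⊆ M → A.Nonempty →
      haveI := Classical.decEq τ
      c' (A.image f) = c A

/-- `K(W)` has the amalgamation property for models of size `lam`. -/
def HasAPAt (W : Set (List L.Color)) (lam : Cardinal.{u}) : Prop :=
  ∀ (σ : Type u) (M₀ M₁ M₂ : Set σ) (c₀ c₁ c₂ : Finset σ → L.Color),
    L.MemK W M₀ c₀ → L.MemK W M₁ c₁ → L.MemK W M₂ c₂ →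
    Cardinal.mk ↥M₀ = lam → Cardinal.mk ↥M₁ = lam → Cardinal.mk ↥M₂ = lam →
    L.Substruct M₀ c₀ M₁ c₁ → L.Substruct M₀ c₀ M₂ c₂ →
    ∃ (τ : Type u) (N : Set τ) (c : Finset τ → L.Color) (f₁ f₂ : σ → τ),
      L.MemK W N c ∧ L.Emb f₁ M₁ c₁ N c ∧ L.Emb f₂ M₂ c₂ N c ∧
      ∀ x ∈ M₀, f₁ x = f₂ x

/-- `K(W)` has the disjoint amalgamation property for models of size `lam`. -/
def HasDAPAt (W : Set (List L.Color)) (lam : Cardinal.{u}) : Prop :=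
  ∀ (σ : Type u) (M₀ M₁ M₂ : Set σ) (c₀ c₁ c₂ : Finset σ → L.Color),
    L.MemK W M₀ c₀ → L.MemK W M₁ c₁ → L.MemK W M₂ c₂ →
    Cardinal.mk ↥M₀ = lam → Cardinal.mk ↥M₁ = lam → Cardinal.mk ↥M₂ = lam →
    L.Substruct M₀ c₀ M₁ c₁ → L.Substruct M₀ c₀ M₂ c₂ →
    ∃ (τ : Type u) (N : Set τ) (c : Finset τ → L.Color) (f₁ f₂ : σ → τ),
      L.MemK W N c ∧ L.Emb f₁ M₁ c₁ N c ∧ L.Emb f₂ M₂ c₂ N c ∧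
      (∀ x ∈ M₀, f₁ x = f₂ x) ∧ f₁ '' M₁ ∩ f₂ '' M₂ = f₁ '' M₀

end ColoringLanguage


/-! ### Auxiliary development for `stmt4` -/

section Stmt4Aux

open scoped Classical

universe w

namespace ColoringLanguage

variable {L : ColoringLanguage.{u}} {σ τ' : Type u}

/-- A superset of prescribed cardinality inside an infinite set. -/
lemma _root_.Set.Infinite.exists_superset_card_eq' {α : Type w} {s : Set α} (hs : s.Infinite)
    {T : Finset α} (hT : ↑T ⊆ s) {n : ℕ} (hn : T.card ≤ n) :
    ∃ E : Finset α, T ⊆ E ∧ ↑E ⊆ s ∧ E.card = n := by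
  classical
  obtain ⟨U, hUs, hUcard⟩ := (hs.diff T.finite_toSet).exists_subset_card_eq (n - T.card)
  refine ⟨T ∪ U, Finset.subset_union_left, ?_, ?_⟩
  · push_cast
    exact Set.union_subset hT (hUs.trans Set.diff_subset)
  · rw [Finset.card_union_of_disjoint, hUcard]
    · omega
    · exact Finset.disjoint_left.2 fun a haT haU => ((hUs haU).2 haT).elim

lemma Mono.mono_subset {c : Finset σ → L.Color} {B B' : Set σ} (h : L.Mono c B)
    (hs : B' ⊆ B) : L.Mono c B' :=
  fun A₁ A₂ h1 h2 => h A₁ A₂ (h1.trans hs) (h2.trans hs)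

lemma not_mono_iff {c : Finset σ → L.Color} {B : Set σ} :
    ¬ L.Mono c B ↔ ∃ A₁ A₂ : Finset σ, ↑A₁ ⊆ B ∧ ↑A₂ ⊆ B ∧ A₁.Nonempty ∧
      A₁.card = A₂.card ∧ c A₁ ≠ c A₂ := by
  unfold Mono
  push_neg
  constructor
  · rintro ⟨A₁, A₂, h1, h2, h3, h4, h5⟩; exact ⟨A₁, A₂, h1, h2, h3, h4, h5⟩
  · rintro ⟨A₁, A₂, h1, h2, h3, h4, h5⟩; exact ⟨A₁, A₂, h1, h2, h3, h4, h5⟩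

/-- Witnesses to non-monochromaticity of a finite set can be taken to be proper subsets. -/
lemma exists_proper_witnesses {c : Finset σ → L.Color} {S : Finset σ}
    (h : ¬ L.Mono c ↑S) :
    ∃ A₁ A₂ : Finset σ, A₁ ⊆ S ∧ A₂ ⊆ S ∧ A₁ ≠ S ∧ A₂ ≠ S ∧ A₁.Nonempty ∧ A₂.Nonempty ∧
      A₁.card = A₂.card ∧ c A₁ ≠ c A₂ := by
  obtain ⟨A₁, A₂, h1, h2, h3, h4, h5⟩ := not_mono_iff.1 h
  rw [Finset.coe_subset] at h1 h2
  have hA₂ne : A₂.Nonempty := by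
    rw [← Finset.card_pos, ← h4, Finset.card_pos]; exact h3
  have hcard : A₁.card ≤ S.card := Finset.card_le_card h1
  refine ⟨A₁, A₂, h1, h2, ?_, ?_, h3, hA₂ne, h4, h5⟩
  · rintro rfl
    have : A₂ = A₁ := Finset.eq_of_subset_of_card_le h2 h4.le
    exact h5 (by rw [this])
  · rintro rfl
    have : A₁ = A₂ := Finset.eq_of_subset_of_card_le h1 h4.ge
    exact h5 (by rw [this])

/-- Monochromaticity of a finite set only depends on the colors of its proper subsets. -/
lemma mono_congr_proper {c c' : Finset σ → L.Color} {S : Finset σ}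
    (h : ∀ A : Finset σ, A ⊆ S → A ≠ S → c' A = c A) :
    L.Mono c' ↑S ↔ L.Mono c ↑S := by
  have key : ∀ A₁ A₂ : Finset σ, A₁ ⊆ S → A₂ ⊆ S → A₁.card = A₂.card →
      (c' A₁ = c' A₂ ↔ c A₁ = c A₂) := by
    intro A₁ A₂ h1 h2 hc
    by_cases hA₁ : A₁ = S
    · have : A₂ = S := Finset.eq_of_subset_of_card_le h2 (hA₁ ▸ hc).le
      rw [hA₁, this]
      simp
    · have hA₂ : A₂ ≠ S := by
        rintro rfl
        exact hA₁ (Finset.eq_of_subset_of_card_le h1 hc.ge)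
      rw [h A₁ h1 hA₁, h A₂ h2 hA₂]
  constructor
  · intro hm A₁ A₂ h1 h2 h3 h4
    rw [Finset.coe_subset] at h1 h2
    exact (key A₁ A₂ h1 h2 h4).1 (hm A₁ A₂ (by exact_mod_cast h1) (by exact_mod_cast h2) h3 h4)
  · intro hm A₁ A₂ h1 h2 h3 h4
    rw [Finset.coe_subset] at h1 h2
    exact (key A₁ A₂ h1 h2 h4).2 (hm A₁ A₂ (by exact_mod_cast h1) (by exact_mod_cast h2) h3 h4)

lemma mono_congr_all {c c' : Finset σ → L.Color} {B : Set σ}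
    (h : ∀ A : Finset σ, ↑A ⊆ B → A.Nonempty → c' A = c A) :
    L.Mono c' B ↔ L.Mono c B := by
  constructor
  · intro hm A₁ A₂ h1 h2 h3 h4
    have h3' : A₂.Nonempty := by rw [← Finset.card_pos, ← h4, Finset.card_pos]; exact h3
    rw [← h A₁ h1 h3, ← h A₂ h2 h3', hm A₁ A₂ h1 h2 h3 h4]
  · intro hm A₁ A₂ h1 h2 h3 h4
    have h3' : A₂.Nonempty := by rw [← Finset.card_pos, ← h4, Finset.card_pos]; exact h3
    rw [h A₁ h1 h3, h A₂ h2 h3', hm A₁ A₂ h1 h2 h3 h4]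

lemma DiagramOf.congr {c c' : Finset σ → L.Color} {B : Finset σ} {l : List L.Color}
    (h : ∀ A : Finset σ, A ⊆ B → A.Nonempty → c' A = c A)
    (hd : L.DiagramOf c B l) : L.DiagramOf c' B l :=
  ⟨hd.1, fun A hA hAne => by rw [h A hA hAne]; exact hd.2 A hA hAne⟩

/-! #### Richness data -/

def RichK (L : ColoringLanguage.{u}) (k : ℕ) : Prop :=
  2 ≤ k ∧ ∃ r₁ r₂ : L.Color, r₁ ≠ r₂ ∧ L.arity r₁ = k ∧ L.arity r₂ = k

noncomputable def rpick (L : ColoringLanguage.{u}) (k : ℕ) (b : Bool) : L.Color :=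
  if h : L.RichK k then (cond b h.2.choose h.2.choose_spec.choose)
  else (L.exists_arity 1 le_rfl).choose

lemma rpick_arity {k : ℕ} (h : L.RichK k) (b : Bool) : L.arity (L.rpick k b) = k := by
  rw [rpick, dif_pos h]
  obtain ⟨-, h1, h2⟩ := h.2.choose_spec.choose_spec
  cases b
  · exact h2
  · exact h1

lemma rpick_ne {k : ℕ} (h : L.RichK k) : L.rpick k true ≠ L.rpick k false := by
  rw [rpick, dif_pos h, rpick, dif_pos h]
  exact h.2.choose_spec.choose_spec.1

/-! #### Splitting points and the altered coloring -/

/-- `p` has a non-monochromatic configuration of size `k` over the base `Z`. -/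
def Splits (L : ColoringLanguage.{u}) (c : Finset σ → L.Color) (Z : Set σ) (p : σ)
    (k : ℕ) : Prop :=
  ∃ E : Finset σ, ↑E ⊆ Z ∧ p ∉ E ∧ E.card = k - 1 ∧ ¬ L.Mono c ↑(insert p E)

def Good (L : ColoringLanguage.{u}) (c : Finset σ → L.Color) (Z : Set σ) (p : σ) : Prop :=
  ∃ k, L.RichK k ∧ L.Splits c Z p k

noncomputable def kp (L : ColoringLanguage.{u}) (c : Finset σ → L.Color) (Z : Set σ)
    (p : σ) : ℕ :=
  sInf {k | L.RichK k ∧ L.Splits c Z p k}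

lemma kp_mem {c : Finset σ → L.Color} {Z : Set σ} {p : σ} (h : L.Good c Z p) :
    L.RichK (L.kp c Z p) ∧ L.Splits c Z p (L.kp c Z p) :=
  Nat.sInf_mem h

lemma kp_min {c : Finset σ → L.Color} {Z : Set σ} {p : σ} {k : ℕ} (h1 : L.RichK k)
    (h2 : L.Splits c Z p k) : L.kp c Z p ≤ k :=
  Nat.sInf_le ⟨h1, h2⟩

/-- `A` is one of the altered sets: it consists of a good point `p` of `M ∖ Z` together
with `k_p - 1` base points, and is non-monochromatic. -/
def IsAlt (L : ColoringLanguage.{u}) (c : Finset σ → L.Color) (M Z : Set σ)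
    (A : Finset σ) : Prop :=
  ∃ p, p ∈ M ∧ p ∉ Z ∧ L.Good c Z p ∧ p ∈ A ∧ ↑(A.erase p) ⊆ Z ∧
    A.card = L.kp c Z p ∧ ¬ L.Mono c ↑A

lemma point_eq_of_erase_subset {Z : Set σ} {A : Finset σ} {p q : σ}
    (hA : ↑(A.erase p) ⊆ Z) (hq : q ∈ A) (hqZ : q ∉ Z) : q = p := by
  by_contra hne
  exact hqZ (hA (Finset.mem_coe.2 (Finset.mem_erase.2 ⟨hne, hq⟩)))

lemma not_isAlt_of_pure {c : Finset σ → L.Color} {M Z : Set σ} {A : Finset σ}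
    (h : ↑A ⊆ Z) : ¬ L.IsAlt c M Z A := by
  rintro ⟨p, -, hpZ, -, hpA, -⟩
  exact hpZ (h hpA)

lemma not_isAlt_of_card_ne {c : Finset σ → L.Color} {M Z : Set σ} {A : Finset σ} {p : σ}
    (hp : p ∉ Z) (hpA : p ∈ A) (hA : ↑(A.erase p) ⊆ Z) (hcard : A.card ≠ L.kp c Z p) :
    ¬ L.IsAlt c M Z A := by
  rintro ⟨p', -, hp'Z, -, hp'A, hA', hcard', -⟩
  have : p' = p := point_eq_of_erase_subset hA hp'A hp'Z
  exact hcard (this ▸ hcard')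

lemma isAlt_not_of_ssubset {c : Finset σ → L.Color} {M Z : Set σ} {A A' : Finset σ}
    (h : L.IsAlt c M Z A) (hsub : A' ⊆ A) (hne : A' ≠ A) : ¬ L.IsAlt c M Z A' := by
  obtain ⟨p, -, hpZ, -, hpA, hAZ, hcard, -⟩ := h
  rintro ⟨p', -, hp'Z, -, hp'A', hA'Z, hcard', -⟩
  have hpp : p' = p := point_eq_of_erase_subset hAZ (hsub hp'A') hp'Z
  subst hpp
  have : A'.card = A.card := by rw [hcard', hcard]
  exact hne (Finset.eq_of_subset_of_card_le hsub this.ge)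

lemma isAlt_rich {c : Finset σ → L.Color} {M Z : Set σ} {A : Finset σ}
    (h : L.IsAlt c M Z A) : L.RichK A.card := by
  obtain ⟨p, -, -, hgood, -, -, hcard, -⟩ := h
  rw [hcard]
  exact (L.kp_mem hgood).1

lemma isAlt_coe_subset {c : Finset σ → L.Color} {M Z : Set σ} {A : Finset σ}
    (hZM : Z ⊆ M) (h : L.IsAlt c M Z A) : ↑A ⊆ M := by
  obtain ⟨p, hpM, -, -, hpA, hAZ, -, -⟩ := h
  intro x hx
  rcases eq_or_ne x p with rfl | hne
  · exact hpM
  · exact hZM (hAZ (Finset.mem_coe.2 (Finset.mem_erase.2 ⟨hne, hx⟩)))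

/-- The altered coloring: altered sets get a rich color (`b` chooses which). -/
noncomputable def altc (L : ColoringLanguage.{u}) (c : Finset σ → L.Color) (M Z : Set σ)
    (b : Bool) : Finset σ → L.Color :=
  fun A => if L.IsAlt c M Z A then L.rpick A.card b else c A

lemma altc_of_not {c : Finset σ → L.Color} {M Z : Set σ} {b : Bool} {A : Finset σ}
    (h : ¬ L.IsAlt c M Z A) : L.altc c M Z b A = c A := if_neg h

lemma altc_of_alt {c : Finset σ → L.Color} {M Z : Set σ} {b : Bool} {A : Finset σ}
    (h : L.IsAlt c M Z A) : L.altc c M Z b A = L.rpick A.card b := if_pos h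

/-- The altered structure is still in `K(W)`. -/
lemma memK_altc {W : Set (List L.Color)} {c : Finset σ → L.Color} {M Z : Set σ} {b : Bool}
    (h : L.MemK W M c) : L.MemK W M (L.altc c M Z b) := by
  constructor
  · intro A hA hAne
    by_cases halt : L.IsAlt c M Z A
    · rw [altc_of_alt halt, rpick_arity (L.isAlt_rich halt)]
    · rw [altc_of_not halt]; exact h.1 A hA hAne
  · intro B hB hBne hBmono
    have hnoalt : ∀ S : Finset σ, S ⊆ B → ¬ L.IsAlt c M Z S := by
      intro S hS halt
      have hmonoS : L.Mono (L.altc c M Z b) ↑S :=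
        hBmono.mono_subset (by exact_mod_cast hS)
      have hproper : ∀ A : Finset σ, A ⊆ S → A ≠ S → L.altc c M Z b A = c A :=
        fun A hA hAne => altc_of_not (L.isAlt_not_of_ssubset halt hA hAne)
      have hnm : ¬ L.Mono c ↑S := by
        obtain ⟨p, -, -, -, -, -, -, hh⟩ := halt
        exact hh
      exact hnm ((mono_congr_proper hproper).1 hmonoS)
    have hcolors : ∀ A : Finset σ, A ⊆ B → A.Nonempty → L.altc c M Z b A = c A :=
      fun A hA _ => altc_of_not (hnoalt A hA)
    have hBmono' : L.Mono c ↑B :=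
      (mono_congr_all fun A hA hAne => hcolors A (by exact_mod_cast hA) hAne).1 hBmono
    obtain ⟨l, hlW, hld⟩ := h.2 B hB hBne hBmono'
    exact ⟨l, hlW, DiagramOf.congr hcolors hld⟩


lemma substruct_altc {c₀ c : Finset σ → L.Color} {M Z : Set σ} {b : Bool}
    (h : L.Substruct Z c₀ M c) : L.Substruct Z c₀ M (L.altc c M Z b) :=
  ⟨h.1, fun A hA hAne => by
    rw [altc_of_not (L.not_isAlt_of_pure hA)]; exact h.2 A hA hAne⟩

lemma not_isAlt_of_not_good {c : Finset σ → L.Color} {M Z : Set σ} {A : Finset σ} {p : σ}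
    (hp : p ∉ Z) (hpA : p ∈ A) (hA : ↑(A.erase p) ⊆ Z) (hgood : ¬ L.Good c Z p) :
    ¬ L.IsAlt c M Z A := by
  rintro ⟨p', -, hp'Z, hgood', hp'A, hA', -, -⟩
  have : p' = p := point_eq_of_erase_subset hA hp'A hp'Z
  exact hgood (this ▸ hgood')

/-- Transfer of non-monochromaticity between two points having matching colors over the
base. -/
lemma nonmono_transfer {cX cY : Finset σ → L.Color} {p q : σ} {E : Finset σ}
    (hpE : p ∉ E) (hqE : q ∉ E)
    (hpure : ∀ A : Finset σ, A ⊆ E → A.Nonempty → cX A = cY A)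
    (hmix : ∀ A : Finset σ, A ⊆ E → A ≠ E → cX (insert p A) = cY (insert q A))
    (hnm : ¬ L.Mono cX ↑(insert p E)) : ¬ L.Mono cY ↑(insert q E) := by
  obtain ⟨A₁, A₂, h1, h2, hne₁, hne₂, hn₁, hn₂, hc, hcc⟩ := exists_proper_witnesses hnm
  have key : ∀ A : Finset σ, A ⊆ insert p E → A ≠ insert p E → A.Nonempty →
      ∃ A', A' ⊆ insert q E ∧ A'.card = A.card ∧ A'.Nonempty ∧ cY A' = cX A := by
    intro A hA hAne hAn
    by_cases hpA : p ∈ A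
    · have hAE : A.erase p ⊆ E := (Finset.subset_insert_iff).1 hA
      have hAEne : A.erase p ≠ E := by
        rintro h
        exact hAne (by rw [← h, Finset.insert_erase hpA])
      refine ⟨insert q (A.erase p), ?_, ?_, Finset.insert_nonempty _ _, ?_⟩
      · exact Finset.insert_subset_insert _ hAE
      · rw [Finset.card_insert_of_notMem (fun h => hqE (hAE h)),
          Finset.card_erase_of_mem hpA]
        have := Finset.card_pos.2 ⟨p, hpA⟩
        omega
      · rw [← hmix (A.erase p) hAE hAEne, Finset.insert_erase hpA]
    · have hAE : A ⊆ E := (Finset.subset_insert_iff_of_notMem hpA).1 hA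
      exact ⟨A, hAE.trans (Finset.subset_insert _ _), rfl, hAn,
        (hpure A hAE hAn).symm⟩
  obtain ⟨A₁', hs₁, hc₁, hn₁', he₁⟩ := key A₁ h1 hne₁ hn₁
  obtain ⟨A₂', hs₂, hc₂, hn₂', he₂⟩ := key A₂ h2 hne₂ hn₂
  exact not_mono_iff.2 ⟨A₁', A₂', by exact_mod_cast hs₁, by exact_mod_cast hs₂, hn₁',
    by rw [hc₁, hc₂, hc], by rw [he₁, he₂]; exact hcc⟩

/-- One-sided transfer of a splitting witness along an identification in an amalgam. -/
lemma splits_transfer {cX cY aX aY : Finset σ → L.Color} {Z : Set σ} {p q : σ} {m : ℕ}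
    (hp0 : p ∉ Z) (hq0 : q ∉ Z)
    (hXsmall : ∀ A : Finset σ, p ∈ A → ↑(A.erase p) ⊆ Z → A.card < m → aX A = cX A)
    (hYsmall : ∀ A : Finset σ, q ∈ A → ↑(A.erase q) ⊆ Z → A.card < m → aY A = cY A)
    (hpureX : ∀ A : Finset σ, ↑A ⊆ Z → A.Nonempty → aX A = cX A)
    (hpureY : ∀ A : Finset σ, ↑A ⊆ Z → A.Nonempty → aY A = cY A)
    (hpureXY : ∀ A : Finset σ, ↑A ⊆ Z → A.Nonempty → aX A = aY A)
    (hkey : ∀ A : Finset σ, p ∈ A → ↑(A.erase p) ⊆ Z → A.Nonempty →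
      aX A = aY (insert q (A.erase p)))
    {E : Finset σ} (hE : ↑E ⊆ Z) (hpE : p ∉ E) (hcard : E.card < m)
    (hnm : ¬ L.Mono cX ↑(insert p E)) : ¬ L.Mono cY ↑(insert q E) := by
  have hqE : q ∉ E := fun h => hq0 (hE h)
  refine nonmono_transfer hpE hqE ?_ ?_ hnm
  · intro A hA hAn
    have hAZ : ↑A ⊆ Z := (Finset.coe_subset.2 hA).trans hE
    rw [← hpureX A hAZ hAn, ← hpureY A hAZ hAn, hpureXY A hAZ hAn]
  · intro A hA hAne
    have hAZ : ↑A ⊆ Z := (Finset.coe_subset.2 hA).trans hE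
    have hpA : p ∉ A := fun h => hp0 (hAZ h)
    have hqA : q ∉ A := fun h => hq0 (hAZ h)
    have hcardA : A.card < E.card := Finset.card_lt_card (lt_of_le_of_ne hA hAne)
    have heq1 : (insert p A).erase p = A := Finset.erase_insert hpA
    have heq2 : (insert q A).erase q = A := Finset.erase_insert hqA
    have hcard1 : (insert p A).card < m := by
      rw [Finset.card_insert_of_notMem hpA]; omega
    have hcard2 : (insert q A).card < m := by
      rw [Finset.card_insert_of_notMem hqA]; omega
    rw [← hXsmall (insert p A) (Finset.mem_insert_self _ _) (by rw [heq1]; exact hAZ) hcard1,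
      ← hYsmall (insert q A) (Finset.mem_insert_self _ _) (by rw [heq2]; exact hAZ) hcard2,
      hkey (insert p A) (Finset.mem_insert_self _ _) (by rw [heq1]; exact hAZ)
        (Finset.insert_nonempty _ _), heq1]


lemma emb_color {f : σ → τ'} {M : Set σ} {c : Finset σ → L.Color} {N : Set τ'}
    {cN : Finset τ' → L.Color} (h : L.Emb f M c N cN) {A : Finset σ} (hA : ↑A ⊆ M)
    (hAn : A.Nonempty) : cN (A.image f) = c A := by
  have h3 := h.2.2 A hA hAn
  convert h3 using 3

/-- The key blocking lemma: an identification in the amalgam of the altered structures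
can only involve non-splitting ("bad") points. -/
lemma blocking {M₀ M₁ M₂ : Set σ} {c₀ c₁ c₂ : Finset σ → L.Color}
    {N : Set τ'} {cN : Finset τ' → L.Color} {g₁ g₂ : σ → τ'}
    (hsub₁ : L.Substruct M₀ c₀ M₁ c₁) (hsub₂ : L.Substruct M₀ c₀ M₂ c₂)
    (hg₁ : L.Emb g₁ M₁ (L.altc c₁ M₁ M₀ true) N cN)
    (hg₂ : L.Emb g₂ M₂ (L.altc c₂ M₂ M₀ false) N cN)
    (hagree : ∀ x ∈ M₀, g₁ x = g₂ x)
    {p q : σ} (hp : p ∈ M₁) (hp0 : p ∉ M₀) (hq : q ∈ M₂) (hq0 : q ∉ M₀)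
    (heq : g₁ p = g₂ q) : ¬ L.Good c₁ M₀ p ∧ ¬ L.Good c₂ M₀ q := by
  set a₁ := L.altc c₁ M₁ M₀ true with ha₁
  set a₂ := L.altc c₂ M₂ M₀ false with ha₂
  -- coercion helpers
  have hsubM₁ : ∀ {x : σ} {A : Finset σ}, p ∈ A → ↑(A.erase p) ⊆ M₀ → x ∈ A → x ∈ M₁ := by
    intro x A hpA hAZ hx
    rcases eq_or_ne x p with rfl | hne
    · exact hp
    · exact hsub₁.1 (hAZ (Finset.mem_coe.2 (Finset.mem_erase.2 ⟨hne, hx⟩)))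
  have hsubM₂ : ∀ {x : σ} {A : Finset σ}, q ∈ A → ↑(A.erase q) ⊆ M₀ → x ∈ A → x ∈ M₂ := by
    intro x A hqA hAZ hx
    rcases eq_or_ne x q with rfl | hne
    · exact hq
    · exact hsub₂.1 (hAZ (Finset.mem_coe.2 (Finset.mem_erase.2 ⟨hne, hx⟩)))
  -- pure sets agree
  have hpure₁ : ∀ A : Finset σ, ↑A ⊆ M₀ → A.Nonempty → a₁ A = c₁ A :=
    fun A hA _ => altc_of_not (L.not_isAlt_of_pure hA)
  have hpure₂ : ∀ A : Finset σ, ↑A ⊆ M₀ → A.Nonempty → a₂ A = c₂ A :=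
    fun A hA _ => altc_of_not (L.not_isAlt_of_pure hA)
  have hpure₁₂ : ∀ A : Finset σ, ↑A ⊆ M₀ → A.Nonempty → a₁ A = a₂ A := by
    intro A hA hAn
    rw [hpure₁ A hA hAn, hpure₂ A hA hAn, ← hsub₁.2 A hA hAn, ← hsub₂.2 A hA hAn]
  -- the key color identities across the identification
  have himg : ∀ A : Finset σ, p ∈ A → ↑(A.erase p) ⊆ M₀ →
      A.image g₁ = (insert q (A.erase p)).image g₂ := by
    intro A hpA hAZ
    conv_lhs => rw [← Finset.insert_erase hpA]
    rw [Finset.image_insert, Finset.image_insert, heq]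
    congr 1
    exact Finset.image_congr (fun x hx => hagree x (hAZ hx))
  have hkey₁₂ : ∀ A : Finset σ, p ∈ A → ↑(A.erase p) ⊆ M₀ → A.Nonempty →
      a₁ A = a₂ (insert q (A.erase p)) := by
    intro A hpA hAZ hAn
    have hA1 : ↑A ⊆ M₁ := fun x hx => hsubM₁ hpA hAZ (Finset.mem_coe.1 hx)
    have hA2 : ↑(insert q (A.erase p)) ⊆ M₂ := by
      rw [Finset.coe_insert]
      exact Set.insert_subset hq (hAZ.trans hsub₂.1)
    rw [← emb_color hg₁ hA1 hAn, ← emb_color hg₂ hA2 (Finset.insert_nonempty _ _),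
      himg A hpA hAZ]
  have hkey₂₁ : ∀ A : Finset σ, q ∈ A → ↑(A.erase q) ⊆ M₀ → A.Nonempty →
      a₂ A = a₁ (insert p (A.erase q)) := by
    intro A hqA hAZ hAn
    have hA2 : ↑A ⊆ M₂ := fun x hx => hsubM₂ hqA hAZ (Finset.mem_coe.1 hx)
    have hA1 : ↑(insert p (A.erase q)) ⊆ M₁ := by
      rw [Finset.coe_insert]
      exact Set.insert_subset hp (hAZ.trans hsub₁.1)
    have himg' : A.image g₂ = (insert p (A.erase q)).image g₁ := by
      conv_lhs => rw [← Finset.insert_erase hqA]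
      rw [Finset.image_insert, Finset.image_insert, ← heq]
      congr 1
      exact (Finset.image_congr (fun x hx => hagree x (hAZ hx))).symm
    rw [← emb_color hg₂ hA2 hAn, ← emb_color hg₁ hA1 (Finset.insert_nonempty _ _), himg']
  -- smallness
  have hsm₁ : ∀ A : Finset σ, p ∈ A → ↑(A.erase p) ⊆ M₀ →
      (¬ L.Good c₁ M₀ p ∨ A.card < L.kp c₁ M₀ p) → a₁ A = c₁ A := by
    intro A h1 h2 h3
    rcases h3 with h | h
    · exact altc_of_not (L.not_isAlt_of_not_good hp0 h1 h2 h)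
    · exact altc_of_not (L.not_isAlt_of_card_ne hp0 h1 h2 (by omega))
  have hsm₂ : ∀ A : Finset σ, q ∈ A → ↑(A.erase q) ⊆ M₀ →
      (¬ L.Good c₂ M₀ q ∨ A.card < L.kp c₂ M₀ q) → a₂ A = c₂ A := by
    intro A h1 h2 h3
    rcases h3 with h | h
    · exact altc_of_not (L.not_isAlt_of_not_good hq0 h1 h2 h)
    · exact altc_of_not (L.not_isAlt_of_card_ne hq0 h1 h2 (by omega))
  -- directional transfers
  -- transfer of p's splitting witness at level `k ≤ kp p` bounded by q's side
  have transfer₁₂ : ∀ (hyp2 : ∀ A : Finset σ, q ∈ A → ↑(A.erase q) ⊆ M₀ →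
        A.card < L.kp c₁ M₀ p → a₂ A = c₂ A)
      (E : Finset σ), ↑E ⊆ M₀ → p ∉ E → E.card < L.kp c₁ M₀ p →
      ¬ L.Mono c₁ ↑(insert p E) → ¬ L.Mono c₂ ↑(insert q E) := by
    intro hyp2 E hE hpE hcard hnm
    exact L.splits_transfer hp0 hq0
      (fun A h1 h2 h3 => hsm₁ A h1 h2 (Or.inr h3)) hyp2
      hpure₁ hpure₂ hpure₁₂ hkey₁₂ hE hpE hcard hnm
  have transfer₂₁ : ∀ (hyp1 : ∀ A : Finset σ, p ∈ A → ↑(A.erase p) ⊆ M₀ →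
        A.card < L.kp c₂ M₀ q → a₁ A = c₁ A)
      (E : Finset σ), ↑E ⊆ M₀ → q ∉ E → E.card < L.kp c₂ M₀ q →
      ¬ L.Mono c₂ ↑(insert q E) → ¬ L.Mono c₁ ↑(insert p E) := by
    intro hyp1 E hE hqE hcard hnm
    exact L.splits_transfer hq0 hp0
      (fun A h1 h2 h3 => hsm₂ A h1 h2 (Or.inr h3)) hyp1
      hpure₂ hpure₁ (fun A h1 h2 => (hpure₁₂ A h1 h2).symm) hkey₂₁ hE hqE hcard hnm
  have h1 : ¬ L.Good c₁ M₀ p := by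
    intro hGp
    obtain ⟨hrich₁, E, hE, hpE, hEcard, hnm⟩ :
        L.RichK (L.kp c₁ M₀ p) ∧ _ := L.kp_mem hGp
    have hk₁2 : 2 ≤ L.kp c₁ M₀ p := hrich₁.1
    have hElt : E.card < L.kp c₁ M₀ p := by omega
    by_cases hGq : L.Good c₂ M₀ q
    · obtain ⟨hrich₂, E', hE', hqE', hE'card, hnm'⟩ :
          L.RichK (L.kp c₂ M₀ q) ∧ _ := L.kp_mem hGq
      have hk₂2 : 2 ≤ L.kp c₂ M₀ q := hrich₂.1
      have hE'lt : E'.card < L.kp c₂ M₀ q := by omega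
      rcases lt_trichotomy (L.kp c₂ M₀ q) (L.kp c₁ M₀ p) with hlt | heqk | hgt
      · -- transfer q's witness; contradicts minimality of kp q... of kp p
        have := transfer₂₁ (fun A hA1 hA2 hA3 => hsm₁ A hA1 hA2 (Or.inr (hA3.trans hlt)))
          E' hE' hqE' hE'lt hnm'
        have hle := L.kp_min (c := c₁) (Z := M₀) (p := p) hrich₂ ⟨E', hE', fun h => hp0 (hE' h), hE'card, this⟩
        omega
      · -- equal levels: both sets are altered, rich colors clash
        have hnm₂ : ¬ L.Mono c₂ ↑(insert q E) := by
          refine transfer₁₂ (fun A hA1 hA2 hA3 => hsm₂ A hA1 hA2 (Or.inr ?_)) E hE hpE hElt hnm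
          omega
        have hqE : q ∉ E := fun h => hq0 (hE h)
        have hcard₁ : (insert p E).card = L.kp c₁ M₀ p := by
          rw [Finset.card_insert_of_notMem hpE]; omega
        have hcard₂ : (insert q E).card = L.kp c₂ M₀ q := by
          rw [Finset.card_insert_of_notMem hqE]; omega
        have halt₁ : L.IsAlt c₁ M₁ M₀ (insert p E) :=
          ⟨p, hp, hp0, hGp, Finset.mem_insert_self _ _,
            by rw [Finset.erase_insert hpE]; exact hE, hcard₁, hnm⟩
        have halt₂ : L.IsAlt c₂ M₂ M₀ (insert q E) :=
          ⟨q, hq, hq0, hGq, Finset.mem_insert_self _ _,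
            by rw [Finset.erase_insert hqE]; exact hE, hcard₂, hnm₂⟩
        have hclash := hkey₁₂ (insert p E) (Finset.mem_insert_self _ _)
          (by rw [Finset.erase_insert hpE]; exact hE) (Finset.insert_nonempty _ _)
        rw [Finset.erase_insert hpE] at hclash
        rw [ha₁, ha₂] at hclash
        rw [altc_of_alt halt₁, altc_of_alt halt₂] at hclash
        rw [hcard₁, hcard₂, heqk] at hclash
        exact rpick_ne hrich₁ (by rw [← heqk] at hclash ⊢; exact hclash)
      · -- kp p < kp q : transfer p's witness, contradicting minimality of kp q
        have := transfer₁₂ (fun A hA1 hA2 hA3 => hsm₂ A hA1 hA2 (Or.inr (hA3.trans hgt)))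
          E hE hpE hElt hnm
        have hle := L.kp_min (c := c₂) (Z := M₀) (p := q) hrich₁
          ⟨E, hE, fun h => hq0 (hE h), hEcard, this⟩
        omega
    · -- q is bad: transfer p's witness makes q good, contradiction
      have := transfer₁₂ (fun A hA1 hA2 _ => hsm₂ A hA1 hA2 (Or.inl hGq)) E hE hpE hElt hnm
      exact hGq ⟨L.kp c₁ M₀ p, hrich₁, E, hE, fun h => hq0 (hE h), hEcard, this⟩
  refine ⟨h1, ?_⟩
  intro hGq
  obtain ⟨hrich₂, E', hE', hqE', hE'card, hnm'⟩ :
      L.RichK (L.kp c₂ M₀ q) ∧ _ := L.kp_mem hGq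
  have hk₂2 : 2 ≤ L.kp c₂ M₀ q := hrich₂.1
  have hE'lt : E'.card < L.kp c₂ M₀ q := by omega
  have := transfer₂₁ (fun A hA1 hA2 _ => hsm₁ A hA1 hA2 (Or.inl h1)) E' hE' hqE' hE'lt hnm'
  exact h1 ⟨L.kp c₂ M₀ q, hrich₂, E', hE', fun h => hp0 (hE' h), hE'card, this⟩


lemma finset_image_inj {g : σ → τ'} {M : Set σ} (hg : Set.InjOn g M) {A A' : Finset σ}
    (hA : ↑A ⊆ M) (hA' : ↑A' ⊆ M) (h : A.image g = A'.image g) : A = A' := by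
  ext x
  constructor <;> intro hx
  · have hgx : g x ∈ A'.image g := h ▸ Finset.mem_image_of_mem g hx
    obtain ⟨y, hy, hxy⟩ := Finset.mem_image.1 hgx
    have : y = x := hg (hA' (Finset.mem_coe.2 hy)) (hA (Finset.mem_coe.2 hx)) hxy
    rwa [← this]
  · have hgx : g x ∈ A.image g := h.symm ▸ Finset.mem_image_of_mem g hx
    obtain ⟨y, hy, hxy⟩ := Finset.mem_image.1 hgx
    have : y = x := hg (hA (Finset.mem_coe.2 hy)) (hA' (Finset.mem_coe.2 hx)) hxy
    rwa [← this]

/-- `S` is the image of an altered set. -/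
def IsAltImg (L : ColoringLanguage.{u}) (c : Finset σ → L.Color) (M Z : Set σ)
    (g : σ → τ') (S : Finset τ') : Prop :=
  ∃ A : Finset σ, L.IsAlt c M Z A ∧ S = A.image g

/-- The recoloring of the amalgam that restores the original colors on images of altered
sets. -/
noncomputable def cstar (L : ColoringLanguage.{u}) (c₁ c₂ : Finset σ → L.Color)
    (M₀ M₁ M₂ : Set σ) (g₁ g₂ : σ → τ') (cN : Finset τ' → L.Color) :
    Finset τ' → L.Color :=
  fun S =>
    if h : L.IsAltImg c₁ M₁ M₀ g₁ S then c₁ h.choose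
    else if h2 : L.IsAltImg c₂ M₂ M₀ g₂ S then c₂ h2.choose
    else cN S

lemma cstar_eq_of_alt₁ {c₁ c₂ : Finset σ → L.Color} {M₀ M₁ M₂ : Set σ} {g₁ g₂ : σ → τ'}
    {cN : Finset τ' → L.Color} (hginj : Set.InjOn g₁ M₁) (hZM : M₀ ⊆ M₁) {A : Finset σ}
    (h : L.IsAlt c₁ M₁ M₀ A) :
    L.cstar c₁ c₂ M₀ M₁ M₂ g₁ g₂ cN (A.image g₁) = c₁ A := by
  have hmem : L.IsAltImg c₁ M₁ M₀ g₁ (A.image g₁) := ⟨A, h, rfl⟩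
  rw [cstar, dif_pos hmem]
  congr 1
  exact finset_image_inj hginj (L.isAlt_coe_subset hZM hmem.choose_spec.1)
    (L.isAlt_coe_subset hZM h) hmem.choose_spec.2.symm

lemma cstar_eq_of_alt₂ {c₁ c₂ : Finset σ → L.Color} {M₀ M₁ M₂ : Set σ} {g₁ g₂ : σ → τ'}
    {cN : Finset τ' → L.Color} (hginj : Set.InjOn g₂ M₂) (hZM : M₀ ⊆ M₂) {A : Finset σ}
    (h : L.IsAlt c₂ M₂ M₀ A) (hno1 : ¬ L.IsAltImg c₁ M₁ M₀ g₁ (A.image g₂)) :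
    L.cstar c₁ c₂ M₀ M₁ M₂ g₁ g₂ cN (A.image g₂) = c₂ A := by
  have hmem : L.IsAltImg c₂ M₂ M₀ g₂ (A.image g₂) := ⟨A, h, rfl⟩
  rw [cstar, dif_neg hno1, dif_pos hmem]
  congr 1
  exact finset_image_inj hginj (L.isAlt_coe_subset hZM hmem.choose_spec.1)
    (L.isAlt_coe_subset hZM h) hmem.choose_spec.2.symm

lemma cstar_eq_of_clean {c₁ c₂ : Finset σ → L.Color} {M₀ M₁ M₂ : Set σ} {g₁ g₂ : σ → τ'}
    {cN : Finset τ' → L.Color} {S : Finset τ'} (h1 : ¬ L.IsAltImg c₁ M₁ M₀ g₁ S)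
    (h2 : ¬ L.IsAltImg c₂ M₂ M₀ g₂ S) :
    L.cstar c₁ c₂ M₀ M₁ M₂ g₁ g₂ cN S = cN S := by
  rw [cstar, dif_neg h1, dif_neg h2]

/-- Pull back the `MemK` diagram condition along a color-preserving injection. -/
lemma memK_pullback {W : Set (List L.Color)} {c' : Finset τ' → L.Color}
    {c : Finset σ → L.Color} {M : Set σ} {f : σ → τ'}
    (hne : Nonempty σ) (hinj : Set.InjOn f M)
    (hcol : ∀ A : Finset σ, ↑A ⊆ M → A.Nonempty → c' (A.image f) = c A)
    (hsrc : ∀ B : Finset σ, ↑B ⊆ M → B.Nonempty → L.Mono c ↑B →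
      ∃ l ∈ W, L.DiagramOf c B l)
    {B' : Finset τ'} (hB' : ↑B' ⊆ f '' M) (hB'n : B'.Nonempty)
    (hB'mono : L.Mono c' ↑B') : ∃ l ∈ W, L.DiagramOf c' B' l := by
  have hre : ∀ A' : Finset τ', ↑A' ⊆ f '' M →
      ∃ A : Finset σ, ↑A ⊆ M ∧ A.image f = A' ∧ A.card = A'.card ∧
        (A'.Nonempty → A.Nonempty) := by
    haveI := hne
    intro A' hA'
    refine ⟨A'.image (Function.invFunOn f M), ?_, ?_, ?_, ?_⟩
    · intro x hx
      obtain ⟨y, hy, rfl⟩ := Finset.mem_image.1 (Finset.mem_coe.1 hx)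
      exact Function.invFunOn_mem (by
        obtain ⟨a, ha, hfa⟩ := hA' (Finset.mem_coe.2 hy)
        exact ⟨a, ha, hfa⟩)
    · rw [Finset.image_image]
      rw [show A'.image (f ∘ Function.invFunOn f M) = A'.image id from
        Finset.image_congr (fun y hy => Function.invFunOn_eq (by
          obtain ⟨a, ha, hfa⟩ := hA' (Finset.mem_coe.2 hy)
          exact ⟨a, ha, hfa⟩))]
      exact Finset.image_id
    · refine le_antisymm ?_ ?_
      · exact Finset.card_image_le
      · calc A'.card = ((A'.image (Function.invFunOn f M)).image f).card := by
              rw [show (A'.image (Function.invFunOn f M)).image f = A' from ?_]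
              · rw [Finset.image_image]
                rw [show A'.image (f ∘ Function.invFunOn f M) = A'.image id from
                  Finset.image_congr (fun y hy => Function.invFunOn_eq (by
                    obtain ⟨a, ha, hfa⟩ := hA' (Finset.mem_coe.2 hy)
                    exact ⟨a, ha, hfa⟩))]
                exact Finset.image_id
          _ ≤ (A'.image (Function.invFunOn f M)).card := Finset.card_image_le
    · intro hn
      exact hn.image _
  obtain ⟨B, hBM, hBim, hBcard, hBn⟩ := hre B' hB'
  have hBmono : L.Mono c ↑B := by
    intro A₁ A₂ h1 h2 h3 h4
    have h1' : ↑A₁ ⊆ M := (Set.Subset.trans h1 (by exact_mod_cast hBM))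
    have h2' : ↑A₂ ⊆ M := (Set.Subset.trans h2 (by exact_mod_cast hBM))
    have h3' : A₂.Nonempty := by rw [← Finset.card_pos, ← h4, Finset.card_pos]; exact h3
    rw [← hcol A₁ h1' h3, ← hcol A₂ h2' h3']
    refine hB'mono (A₁.image f) (A₂.image f) ?_ ?_ (h3.image f) ?_
    · rw [← hBim]
      exact_mod_cast Finset.image_subset_image (by exact_mod_cast h1)
    · rw [← hBim]
      exact_mod_cast Finset.image_subset_image (by exact_mod_cast h2)
    · rw [Finset.card_image_of_injOn (hinj.mono h1'),
        Finset.card_image_of_injOn (hinj.mono h2'), h4]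
  obtain ⟨l, hlW, hld⟩ := hsrc B hBM (hBn hB'n) hBmono
  refine ⟨l, hlW, ?_, ?_⟩
  · rw [hld.1, hBcard]
  · intro A' hA' hA'n
    obtain ⟨A, hAM, hAim, hAcard, hAn⟩ := hre A' (Set.Subset.trans (by exact_mod_cast hA') hB')
    have hAB : A ⊆ B := by
      have : A.image f ⊆ B.image f := by rw [hAim, hBim]; exact hA'
      intro x hx
      have : f x ∈ B.image f := this (Finset.mem_image_of_mem f hx)
      obtain ⟨y, hy, hxy⟩ := Finset.mem_image.1 this
      rwa [← hinj (hBM (Finset.mem_coe.2 hy)) (hAM (Finset.mem_coe.2 hx)) hxy]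
    have hcA : c' A' = c A := by rw [← hAim]; exact hcol A hAM (hAn hA'n)
    rw [← hAcard, hcA]
    exact hld.2 A hAB (hAn hA'n)


/-- Around a non-splitting ("bad") point, everything is fully monochromatic. -/
lemma bad_fullmono {c : Finset σ → L.Color} {M₀ : Set σ} {q : σ}
    (hrich : ∀ m : ℕ, ∃ k : ℕ, m ≤ k ∧ L.RichK k)
    (hM₀ : M₀.Infinite) (hq0 : q ∉ M₀) (hbad : ¬ L.Good c M₀ q)
    {S S' : Finset σ} (hS : ↑S ⊆ insert q M₀) (hS' : ↑S' ⊆ insert q M₀)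
    (hSn : S.Nonempty) (hcard : S.card = S'.card) : c S = c S' := by
  classical
  set T : Finset σ := (S ∪ S').erase q with hT
  have hTM₀ : ↑T ⊆ M₀ := by
    intro x hx
    obtain ⟨hxq, hxu⟩ := Finset.mem_erase.1 (Finset.mem_coe.1 hx)
    rcases Finset.mem_union.1 hxu with h | h
    · rcases Set.mem_insert_iff.1 (hS (Finset.mem_coe.2 h)) with rfl | h'
      · exact absurd rfl hxq
      · exact h'
    · rcases Set.mem_insert_iff.1 (hS' (Finset.mem_coe.2 h)) with rfl | h'
      · exact absurd rfl hxq
      · exact h'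
  obtain ⟨k, hk1, hk2⟩ := hrich (T.card + 2)
  obtain ⟨E, hTE, hEM₀, hEcard⟩ := hM₀.exists_superset_card_eq' hTM₀
    (n := k - 1) (by omega)
  have hqE : q ∉ E := fun h => hq0 (hEM₀ h)
  have hmono : L.Mono c ↑(insert q E) := by
    by_contra hnm
    exact hbad ⟨k, hk2, E, hEM₀, hqE, hEcard, hnm⟩
  have hsub : ∀ {X : Finset σ}, ↑X ⊆ insert q M₀ → X ⊆ S ∪ S' → ↑X ⊆ ↑(insert q E) := by
    intro X hX hXu x hx
    rcases Set.mem_insert_iff.1 (hX hx) with rfl | hxM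
    · exact Finset.mem_coe.2 (Finset.mem_insert_self _ _)
    · refine Finset.mem_coe.2 (Finset.mem_insert_of_mem (hTE ?_))
      exact Finset.mem_erase.2 ⟨fun h => hq0 (h ▸ hxM), hXu (Finset.mem_coe.1 hx)⟩
  exact hmono S S' (hsub hS Finset.subset_union_left)
    (hsub hS' Finset.subset_union_right) hSn hcard

lemma toLeft_image_inl {α β : Type w} (B : Finset α) [DecidableEq (α ⊕ β)] :
    (B.image Sum.inl : Finset (α ⊕ β)).toLeft = B := by
  ext x; simp

lemma toRight_image_inl {α β : Type w} (B : Finset α) [DecidableEq (α ⊕ β)] :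
    (B.image Sum.inl : Finset (α ⊕ β)).toRight = ∅ := by
  ext x; simp

end ColoringLanguage

end Stmt4Aux

/-- for rich coloring classes, AP in `lam` is equivalent to DAP in `lam`. -/
theorem stmt4 (L : ColoringLanguage.{u}) (W : Set (List L.Color))
    (hW : L.IsAllowed W)
    (hrich : ∀ m : ℕ, ∃ k : ℕ, m ≤ k ∧ 2 ≤ k ∧
      ∃ r₁ r₂ : L.Color, r₁ ≠ r₂ ∧ L.arity r₁ = k ∧ L.arity r₂ = k)
    (hsplit : ∀ w ∈ W, w.length = 1 →
      ∃ n : ℕ, ∃ w₁ ∈ W, ∃ w₂ ∈ W, w₁.length = n ∧ w₂.length = n ∧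
        w₁.take 1 = w ∧ w₂.take 1 = w ∧ w₁[n - 1]? ≠ w₂[n - 1]?)
    (lam : Cardinal.{u}) (hlam : ℵ₀ ≤ lam) :
    L.HasAPAt W lam ↔ L.HasDAPAt W lam := by
  constructor
  · intro hAP
    intro σ M₀ M₁ M₂ c₀ c₁ c₂ h₀ h₁ h₂ hk₀ hk₁ hk₂ hss₁ hss₂
    classical
    -- basic facts
    have hrich' : ∀ m : ℕ, ∃ k, m ≤ k ∧ L.RichK k := by
      intro m
      obtain ⟨k, hk1, hk2, r₁, r₂, hne, ha₁, ha₂⟩ := hrich m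
      exact ⟨k, hk1, hk2, r₁, r₂, hne, ha₁, ha₂⟩
    have hM₀inf : M₀.Infinite := by
      rw [← Set.infinite_coe_iff]
      refine Cardinal.infinite_iff.mpr ?_
      rw [hk₀]; exact hlam
    have hσne : Nonempty σ := ⟨hM₀inf.nonempty.choose⟩
    -- amalgamate the altered structures
    obtain ⟨τ', N, cN, g₁, g₂, hN, hg₁, hg₂, hagree⟩ :=
      hAP σ M₀ M₁ M₂ c₀ (L.altc c₁ M₁ M₀ true) (L.altc c₂ M₂ M₀ false)
        h₀ (L.memK_altc h₁) (L.memK_altc h₂) hk₀ hk₁ hk₂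
        (L.substruct_altc hss₁) (L.substruct_altc hss₂)
    have hblock : ∀ {p q : σ}, p ∈ M₁ → p ∉ M₀ → q ∈ M₂ → q ∉ M₀ → g₁ p = g₂ q →
        ¬ L.Good c₁ M₀ p ∧ ¬ L.Good c₂ M₀ q :=
      fun hp hp0 hq hq0 heq => L.blocking hss₁ hss₂ hg₁ hg₂ hagree hp hp0 hq hq0 heq
    set cs := L.cstar c₁ c₂ M₀ M₁ M₂ g₁ g₂ cN with hcs
    -- no cross alterations
    have hC0 : ∀ B : Finset σ, ↑B ⊆ M₂ → ¬ L.IsAltImg c₁ M₁ M₀ g₁ (B.image g₂) := by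
      rintro B hB ⟨A, hA, him⟩
      obtain ⟨p, hpM, hp0, hGood, hpA, hAZ, -, -⟩ := hA
      have : g₁ p ∈ B.image g₂ := him ▸ Finset.mem_image_of_mem g₁ hpA
      obtain ⟨b, hb, hbeq⟩ := Finset.mem_image.1 this
      have hbM₂ : b ∈ M₂ := hB (Finset.mem_coe.2 hb)
      by_cases hb0 : b ∈ M₀
      · have : g₁ p = g₁ b := by rw [hbeq.symm, ← hagree b hb0]
        have : p = b := hg₁.1 hpM (hss₁.1 hb0) this
        exact hp0 (this ▸ hb0)
      · exact (hblock hpM hp0 hbM₂ hb0 hbeq.symm).1 hGood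
    have hC0' : ∀ A : Finset σ, ↑A ⊆ M₁ → ¬ L.IsAltImg c₂ M₂ M₀ g₂ (A.image g₁) := by
      rintro A hA ⟨B, hB, him⟩
      obtain ⟨q, hqM, hq0, hGood, hqB, hBZ, -, -⟩ := hB
      have : g₂ q ∈ A.image g₁ := him ▸ Finset.mem_image_of_mem g₂ hqB
      obtain ⟨a, ha, haeq⟩ := Finset.mem_image.1 this
      have haM₁ : a ∈ M₁ := hA (Finset.mem_coe.2 ha)
      by_cases ha0 : a ∈ M₀
      · have : g₂ a = g₂ q := by rw [← hagree a ha0, haeq]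
        have : a = q := hg₂.1 (hss₂.1 ha0) hqM this
        exact hq0 (this ▸ ha0)
      · exact (hblock haM₁ ha0 hqM hq0 haeq).2 hGood
    have hCinj1 : ∀ A : Finset σ, ↑A ⊆ M₁ → ¬ L.IsAlt c₁ M₁ M₀ A →
        ¬ L.IsAltImg c₁ M₁ M₀ g₁ (A.image g₁) := by
      rintro A hA halt ⟨A', hA', him⟩
      exact halt ((ColoringLanguage.finset_image_inj hg₁.1 hA (L.isAlt_coe_subset hss₁.1 hA') him) ▸ hA')
    have hCinj2 : ∀ B : Finset σ, ↑B ⊆ M₂ → ¬ L.IsAlt c₂ M₂ M₀ B →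
        ¬ L.IsAltImg c₂ M₂ M₀ g₂ (B.image g₂) := by
      rintro B hB halt ⟨B', hB', him⟩
      exact halt ((ColoringLanguage.finset_image_inj hg₂.1 hB (L.isAlt_coe_subset hss₂.1 hB') him) ▸ hB')
    -- the recolored amalgam restores the original colors
    have hE1col : ∀ A : Finset σ, ↑A ⊆ M₁ → A.Nonempty → cs (A.image g₁) = c₁ A := by
      intro A hA hAn
      by_cases halt : L.IsAlt c₁ M₁ M₀ A
      · rw [hcs]; exact L.cstar_eq_of_alt₁ hg₁.1 hss₁.1 halt
      · rw [hcs, L.cstar_eq_of_clean (hCinj1 A hA halt) (hC0' A hA),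
          L.emb_color hg₁ hA hAn, ColoringLanguage.altc_of_not halt]
    have hE2col : ∀ B : Finset σ, ↑B ⊆ M₂ → B.Nonempty → cs (B.image g₂) = c₂ B := by
      intro B hB hBn
      by_cases halt : L.IsAlt c₂ M₂ M₀ B
      · rw [hcs]; exact L.cstar_eq_of_alt₂ hg₂.1 hss₂.1 halt (hC0 B hB)
      · rw [hcs, L.cstar_eq_of_clean (hC0 B hB) (hCinj2 B hB halt),
          L.emb_color hg₂ hB hBn, ColoringLanguage.altc_of_not halt]
    -- images of altered sets are not monochromatic for `cs`
    have hF2 : ∀ S : Finset τ', (L.IsAltImg c₁ M₁ M₀ g₁ S ∨ L.IsAltImg c₂ M₂ M₀ g₂ S) →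
        ¬ L.Mono cs ↑S := by
      rintro S (⟨A, hA, rfl⟩ | ⟨A, hA, rfl⟩)
      · have hAM : ↑A ⊆ M₁ := L.isAlt_coe_subset hss₁.1 hA
        have hnm : ¬ L.Mono c₁ ↑A := by
          obtain ⟨p, -, -, -, -, -, -, hh⟩ := hA
          exact hh
        obtain ⟨A₁, A₂, hs₁', hs₂', hne₁, hne₂, hn₁, hn₂, hc, hcc⟩ :=
          L.exists_proper_witnesses hnm
        have key : ∀ A' : Finset σ, A' ⊆ A → A' ≠ A → A'.Nonempty →
            cs (A'.image g₁) = c₁ A' := by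
          intro A' h1 h2 h3
          exact hE1col A' ((Finset.coe_subset.2 h1).trans hAM) h3
        refine ColoringLanguage.not_mono_iff.mpr ⟨A₁.image g₁, A₂.image g₁, ?_, ?_, hn₁.image g₁, ?_, ?_⟩
        · exact_mod_cast Finset.image_subset_image hs₁'
        · exact_mod_cast Finset.image_subset_image hs₂'
        · rw [Finset.card_image_of_injOn (hg₁.1.mono ((Finset.coe_subset.2 hs₁').trans hAM)),
            Finset.card_image_of_injOn (hg₁.1.mono ((Finset.coe_subset.2 hs₂').trans hAM)), hc]
        · rw [key A₁ hs₁' hne₁ hn₁, key A₂ hs₂' hne₂ hn₂]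
          exact hcc
      · have hAM : ↑A ⊆ M₂ := L.isAlt_coe_subset hss₂.1 hA
        have hnm : ¬ L.Mono c₂ ↑A := by
          obtain ⟨p, -, -, -, -, -, -, hh⟩ := hA
          exact hh
        obtain ⟨A₁, A₂, hs₁', hs₂', hne₁, hne₂, hn₁, hn₂, hc, hcc⟩ :=
          L.exists_proper_witnesses hnm
        have key : ∀ A' : Finset σ, A' ⊆ A → A' ≠ A → A'.Nonempty →
            cs (A'.image g₂) = c₂ A' := by
          intro A' h1 h2 h3
          exact hE2col A' ((Finset.coe_subset.2 h1).trans hAM) h3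
        refine ColoringLanguage.not_mono_iff.mpr ⟨A₁.image g₂, A₂.image g₂, ?_, ?_, hn₁.image g₂, ?_, ?_⟩
        · exact_mod_cast Finset.image_subset_image hs₁'
        · exact_mod_cast Finset.image_subset_image hs₂'
        · rw [Finset.card_image_of_injOn (hg₂.1.mono ((Finset.coe_subset.2 hs₁').trans hAM)),
            Finset.card_image_of_injOn (hg₂.1.mono ((Finset.coe_subset.2 hs₂').trans hAM)), hc]
        · rw [key A₁ hs₁' hne₁ hn₁, key A₂ hs₂' hne₂ hn₂]
          exact hcc
    -- the recolored amalgam is in `K(W)`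
    have hMemKcs : L.MemK W N cs := by
      constructor
      · intro S hS hSn
        rw [hcs, ColoringLanguage.cstar]
        split_ifs with h1 h2
        · obtain ⟨hA', heq'⟩ := h1.choose_spec
          have hAM : ↑h1.choose ⊆ M₁ := L.isAlt_coe_subset hss₁.1 hA'
          have hAn : h1.choose.Nonempty := by
            rw [← Finset.image_nonempty (f := g₁), ← heq']
            exact hSn
          have hcard : S.card = h1.choose.card := by
            conv_lhs => rw [heq']
            exact Finset.card_image_of_injOn (hg₁.1.mono hAM)
          rw [h₁.1 h1.choose hAM hAn]
          exact hcard.symm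
        · obtain ⟨hA', heq'⟩ := h2.choose_spec
          have hAM : ↑h2.choose ⊆ M₂ := L.isAlt_coe_subset hss₂.1 hA'
          have hAn : h2.choose.Nonempty := by
            rw [← Finset.image_nonempty (f := g₂), ← heq']
            exact hSn
          have hcard : S.card = h2.choose.card := by
            conv_lhs => rw [heq']
            exact Finset.card_image_of_injOn (hg₂.1.mono hAM)
          rw [h₂.1 h2.choose hAM hAn]
          exact hcard.symm
        · exact hN.1 S hS hSn
      · intro B hB hBn hBmono
        have hclean : ∀ S : Finset τ', S ⊆ B → cs S = cN S := by
          intro S hS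
          have h1 : ¬ L.IsAltImg c₁ M₁ M₀ g₁ S := by
            intro h
            exact hF2 S (Or.inl h) (hBmono.mono_subset (by exact_mod_cast hS))
          have h2 : ¬ L.IsAltImg c₂ M₂ M₀ g₂ S := by
            intro h
            exact hF2 S (Or.inr h) (hBmono.mono_subset (by exact_mod_cast hS))
          rw [hcs]
          exact L.cstar_eq_of_clean h1 h2
        have hBmono' : L.Mono cN ↑B :=
          (L.mono_congr_all fun A hA _ => hclean A (by exact_mod_cast hA)).1 hBmono
        obtain ⟨l, hlW, hld⟩ := hN.2 B hB hBn hBmono'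
        exact ⟨l, hlW, ColoringLanguage.DiagramOf.congr (fun A hA _ => hclean A hA) hld⟩
    -- the embeddings of the original structures into the recolored amalgam
    have hEmb1 : L.Emb g₁ M₁ c₁ N cs :=
      ⟨hg₁.1, hg₁.2.1, fun A hA hAn => by
        have := hE1col A hA hAn
        convert this using 3⟩
    have hEmb2 : L.Emb g₂ M₂ c₂ N cs :=
      ⟨hg₂.1, hg₂.2.1, fun A hA hAn => by
        have := hE2col A hA hAn
        convert this using 3⟩
    -- the final structure: redirect the bad points of `M₂` to fresh points
    haveI := hσne
    have hτ'ne : Nonempty τ' := ⟨g₁ hM₀inf.nonempty.choose⟩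
    set Bad : Set σ := {x | x ∈ M₂ ∧ x ∉ M₀ ∧ ¬ L.Good c₂ M₀ x} with hBadDef
    have hD : ∀ n : ℕ, ∃ Dn : Finset σ, ↑Dn ⊆ M₀ ∧ Dn.card = n := fun n =>
      hM₀inf.exists_subset_card_eq n
    choose D hDsub hDcard using hD
    set χ : ℕ → L.Color := fun n => c₂ (D n) with hχ
    set f₁ : σ → τ' ⊕ σ := fun x => Sum.inl (g₁ x) with hf₁
    set f₂ : σ → τ' ⊕ σ := fun x => if x ∈ Bad then Sum.inr x else Sum.inl (g₂ x) with hf₂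
    set NN : Set (τ' ⊕ σ) := (Sum.inl '' N) ∪ (Sum.inr '' Bad) with hNN
    set P₂ : Finset (τ' ⊕ σ) → Finset σ := fun A =>
      A.toRight ∪ (A.toLeft.image (Function.invFunOn g₂ M₂)) with hP₂
    set cfin : Finset (τ' ⊕ σ) → L.Color := fun A =>
      if A.toRight = ∅ then cs A.toLeft
      else if ↑A.toRight ⊆ Bad ∧ ↑A.toLeft ⊆ g₂ '' (M₂ \ Bad) then c₂ (P₂ A)
      else χ A.card with hcfin
    have hinv : ∀ x ∈ M₂, Function.invFunOn g₂ M₂ (g₂ x) = x := fun x hx =>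
      hg₂.1.leftInvOn_invFunOn hx
    -- images under f₂
    have htR : ∀ A : Finset σ, (A.image f₂).toRight = A.filter (fun a => a ∈ Bad) := by
      intro A
      ext x
      simp only [Finset.mem_toRight, Finset.mem_image, Finset.mem_filter]
      constructor
      · rintro ⟨a, ha, hfa⟩
        simp only [hf₂] at hfa
        by_cases hab : a ∈ Bad
        · rw [if_pos hab] at hfa
          have : a = x := Sum.inr_injective hfa
          exact ⟨this ▸ ha, this ▸ hab⟩
        · rw [if_neg hab] at hfa
          exact absurd hfa (by simp)
      · rintro ⟨hx, hxb⟩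
        exact ⟨x, hx, by simp only [hf₂]; exact if_pos hxb⟩
    have htL : ∀ A : Finset σ,
        (A.image f₂).toLeft = (A.filter (fun a => a ∉ Bad)).image g₂ := by
      intro A
      ext y
      simp only [Finset.mem_toLeft, Finset.mem_image, Finset.mem_filter]
      constructor
      · rintro ⟨a, ha, hfa⟩
        simp only [hf₂] at hfa
        by_cases hab : a ∈ Bad
        · rw [if_pos hab] at hfa
          exact absurd hfa (by simp)
        · rw [if_neg hab] at hfa
          exact ⟨a, ⟨ha, hab⟩, Sum.inl_injective hfa⟩
      · rintro ⟨a, ⟨ha, hab⟩, rfl⟩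
        exact ⟨a, ha, by simp only [hf₂]; exact if_neg hab⟩
    have hP₂A : ∀ A : Finset σ, ↑A ⊆ M₂ → P₂ (A.image f₂) = A := by
      intro A hA
      simp only [hP₂]
      rw [htR, htL, Finset.image_image]
      have hfix : (A.filter (fun a => a ∉ Bad)).image (Function.invFunOn g₂ M₂ ∘ g₂) =
          A.filter (fun a => a ∉ Bad) := by
        rw [show (A.filter (fun a => a ∉ Bad)).image (Function.invFunOn g₂ M₂ ∘ g₂) =
            (A.filter (fun a => a ∉ Bad)).image id from Finset.image_congr (by
          intro x hx
          exact hinv x (hA (Finset.mem_coe.2 (Finset.mem_of_mem_filter x hx))))]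
        exact Finset.image_id
      rw [hfix, Finset.filter_union_filter_not_eq]
    -- the color of images of subsets of `M₂`
    have hG1 : ∀ A : Finset σ, ↑A ⊆ M₂ → A.Nonempty → cfin (A.image f₂) = c₂ A := by
      intro A hA hAn
      simp only [hcfin]
      by_cases hb : (A.image f₂).toRight = ∅
      · rw [if_pos hb, htL]
        have hfilter : A.filter (fun a => a ∉ Bad) = A := by
          rw [htR] at hb
          rw [Finset.filter_eq_self]
          intro x hx hxb
          have : x ∈ A.filter (fun a => a ∈ Bad) := Finset.mem_filter.2 ⟨hx, hxb⟩
          rw [hb] at this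
          exact absurd this (Finset.notMem_empty x)
        rw [hfilter]
        exact hE2col A hA hAn
      · have hcond : ↑(A.image f₂).toRight ⊆ Bad ∧
            ↑(A.image f₂).toLeft ⊆ g₂ '' (M₂ \ Bad) := by
          constructor
          · rw [htR]
            intro x hx
            exact (Finset.mem_filter.1 (Finset.mem_coe.1 hx)).2
          · rw [htL]
            intro y hy
            obtain ⟨a, ha, rfl⟩ := Finset.mem_image.1 (Finset.mem_coe.1 hy)
            obtain ⟨haA, hab⟩ := Finset.mem_filter.1 ha
            exact ⟨a, ⟨hA (Finset.mem_coe.2 haA), hab⟩, rfl⟩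
        rw [if_neg hb, if_pos hcond, hP₂A A hA]
    -- the two embeddings
    have hf₂inj : Set.InjOn f₂ M₂ := by
      intro x hx y hy hxy
      simp only [hf₂] at hxy
      by_cases hxb : x ∈ Bad <;> by_cases hyb : y ∈ Bad
      · rw [if_pos hxb, if_pos hyb] at hxy
        exact Sum.inr_injective hxy
      · rw [if_pos hxb, if_neg hyb] at hxy
        exact absurd hxy (by simp)
      · rw [if_neg hxb, if_pos hyb] at hxy
        exact absurd hxy (by simp)
      · rw [if_neg hxb, if_neg hyb] at hxy
        exact hg₂.1 hx hy (Sum.inl_injective hxy)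
    have hf₂im : f₂ '' M₂ ⊆ NN := by
      rintro z ⟨x, hx, rfl⟩
      simp only [hf₂]
      by_cases hxb : x ∈ Bad
      · rw [if_pos hxb]
        exact Or.inr ⟨x, hxb, rfl⟩
      · rw [if_neg hxb]
        exact Or.inl ⟨g₂ x, hg₂.2.1 ⟨x, hx, rfl⟩, rfl⟩
    have hEmbf₂ : L.Emb f₂ M₂ c₂ NN cfin :=
      ⟨hf₂inj, hf₂im, fun A hA hAn => by
        have := hG1 A hA hAn
        convert this using 3⟩
    have hf₁col : ∀ A : Finset σ, ↑A ⊆ M₁ → A.Nonempty → cfin (A.image f₁) = c₁ A := by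
      intro A hA hAn
      have him : A.image f₁ = (A.image g₁).image Sum.inl := by
        rw [Finset.image_image]
        rfl
      rw [him]
      simp only [hcfin]
      rw [ColoringLanguage.toRight_image_inl, ColoringLanguage.toLeft_image_inl, if_pos rfl]
      exact hE1col A hA hAn
    have hEmbf₁ : L.Emb f₁ M₁ c₁ NN cfin := by
      refine ⟨?_, ?_, fun A hA hAn => by
        have := hf₁col A hA hAn
        convert this using 3⟩
      · intro x hx y hy hxy
        simp only [hf₁] at hxy
        exact hg₁.1 hx hy (Sum.inl_injective hxy)
      · rintro z ⟨x, hx, rfl⟩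
        simp only [hf₁]
        exact Or.inl ⟨g₁ x, hg₁.2.1 ⟨x, hx, rfl⟩, rfl⟩
    have hagr : ∀ x ∈ M₀, f₁ x = f₂ x := by
      intro x hx
      simp only [hf₁, hf₂]
      rw [if_neg (fun hb : x ∈ Bad => hb.2.1 hx), hagree x hx]
    -- disjointness over the base
    have hdisj : f₁ '' M₁ ∩ f₂ '' M₂ = f₁ '' M₀ := by
      apply Set.Subset.antisymm
      · rintro z ⟨⟨a, haM, rfl⟩, ⟨b, hbM, hfb⟩⟩
        by_cases hbBad : b ∈ Bad
        · simp only [hf₁, hf₂] at hfb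
          rw [if_pos hbBad] at hfb
          exact absurd hfb (by simp)
        · simp only [hf₁, hf₂] at hfb
          rw [if_neg hbBad] at hfb
          have hgab : g₂ b = g₁ a := Sum.inl_injective hfb
          by_cases hb0 : b ∈ M₀
          · have : g₁ b = g₁ a := by rw [hagree b hb0]; exact hgab
            have hba : b = a := hg₁.1 (hss₁.1 hb0) haM this
            exact ⟨b, hb0, congrArg f₁ hba⟩
          · have hGb : L.Good c₂ M₀ b := by
              by_contra hGb
              exact hbBad ⟨hbM, hb0, hGb⟩
            by_cases ha0 : a ∈ M₀
            · have : g₂ a = g₂ b := by rw [← hagree a ha0]; exact hgab.symm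
              have : a = b := hg₂.1 (hss₂.1 ha0) hbM this
              exact absurd (this ▸ ha0) hb0
            · exact absurd hGb (hblock haM ha0 hbM hb0 hgab.symm).2
      · rintro z ⟨a, ha, rfl⟩
        exact ⟨⟨a, hss₁.1 ha, rfl⟩, ⟨a, hss₂.1 ha, (hagr a ha).symm⟩⟩
    -- membership of the final structure in `K(W)`
    have hMemKfin : L.MemK W NN cfin := by
      constructor
      · intro A hA hAn
        simp only [hcfin]
        split_ifs with hb hcond
        · have hLsub : ↑A.toLeft ⊆ N := by
            intro y hy
            have hmem : Sum.inl y ∈ A := Finset.mem_toLeft.1 (Finset.mem_coe.1 hy)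
            rcases hA (Finset.mem_coe.2 hmem) with ⟨n, hn, heq2⟩ | ⟨bq, hbq, heq2⟩
            · rwa [show n = y from Sum.inl_injective heq2] at hn
            · exact absurd heq2 (by simp)
          have hLn : A.toLeft.Nonempty := by
            obtain ⟨x, hx⟩ := hAn
            cases x with
            | inl y => exact ⟨y, Finset.mem_toLeft.2 hx⟩
            | inr z =>
              have : z ∈ A.toRight := Finset.mem_toRight.2 hx
              rw [hb] at this
              exact absurd this (Finset.notMem_empty z)
          rw [hMemKcs.1 A.toLeft hLsub hLn]
          have hcc := Finset.card_toLeft_add_card_toRight (u := A)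
          rw [hb] at hcc
          simpa using hcc
        · -- arity in the pulled-back case
          have hP₂sub : ↑(P₂ A) ⊆ M₂ := by
            simp only [hP₂]
            intro x hx
            rcases Finset.mem_union.1 (Finset.mem_coe.1 hx) with h | h
            · exact (hcond.1 (Finset.mem_coe.2 h)).1
            · obtain ⟨y, hy, rfl⟩ := Finset.mem_image.1 h
              obtain ⟨a, ⟨haM, -⟩, rfl⟩ := hcond.2 (Finset.mem_coe.2 hy)
              rw [hinv a haM]
              exact haM
          have hP₂card : (P₂ A).card = A.card := by
            simp only [hP₂]
            rw [Finset.card_union_of_disjoint, Finset.card_image_of_injOn]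
            · rw [← Finset.card_toLeft_add_card_toRight (u := A)]
              omega
            · intro y hy y' hy' heq2
              obtain ⟨a, ⟨haM, -⟩, rfl⟩ := hcond.2 hy
              obtain ⟨a', ⟨haM', -⟩, rfl⟩ := hcond.2 hy'
              rw [hinv a haM, hinv a' haM'] at heq2
              rw [heq2]
            · rw [Finset.disjoint_left]
              intro x hx hx'
              obtain ⟨y, hy, hyx⟩ := Finset.mem_image.1 hx'
              obtain ⟨a, ⟨haM, hanb⟩, rfl⟩ := hcond.2 (Finset.mem_coe.2 hy)
              rw [hinv a haM] at hyx
              exact hanb (hyx ▸ hcond.1 (Finset.mem_coe.2 hx))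
          have hP₂n : (P₂ A).Nonempty := by
            rw [← Finset.card_pos, hP₂card, Finset.card_pos]
            exact hAn
          rw [h₂.1 (P₂ A) hP₂sub hP₂n, hP₂card]
        · have hAc : 0 < A.card := Finset.card_pos.2 hAn
          simp only [hχ]
          have hDne : (D A.card).Nonempty := by
            rw [← Finset.card_pos, hDcard]
            exact hAc
          rw [h₂.1 (D A.card) ((hDsub _).trans hss₂.1) hDne, hDcard]
      · intro B hB hBn hBmono
        by_cases hbr : B.toRight = ∅
        · -- pure left part: pull back along `Sum.inl` from the recolored amalgam
          have hBim : ↑B ⊆ (Sum.inl '' N : Set (τ' ⊕ σ)) := by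
            intro x hx
            rcases hB hx with h | ⟨bq, hbq, heq2⟩
            · exact h
            · rw [← heq2] at hx
              have : bq ∈ B.toRight := Finset.mem_toRight.2 (Finset.mem_coe.1 hx)
              rw [hbr] at this
              exact absurd this (Finset.notMem_empty bq)
          refine L.memK_pullback hτ'ne (Sum.inl_injective.injOn) ?_ hMemKcs.2 hBim hBn hBmono
          intro S hS hSn
          simp only [hcfin]
          rw [ColoringLanguage.toRight_image_inl, ColoringLanguage.toLeft_image_inl, if_pos rfl]
        · obtain ⟨q0, hq0r⟩ := Finset.nonempty_iff_ne_empty.2 hbr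
          have hq0B : Sum.inr q0 ∈ B := Finset.mem_toRight.1 hq0r
          have hq0Bad : q0 ∈ Bad := by
            rcases hB (Finset.mem_coe.2 hq0B) with ⟨n, hn, heq2⟩ | ⟨bq, hbq, heq2⟩
            · exact absurd heq2 (by simp)
            · rwa [show bq = q0 from Sum.inr_injective heq2] at hbq
          obtain ⟨hq0M₂, hq00, hq0G⟩ := hq0Bad
          by_cases hgl : ↑B.toLeft ⊆ g₂ '' (M₂ \ Bad)
          · -- everything comes from `M₂`: pull back along `f₂`
            have hBim : ↑B ⊆ f₂ '' M₂ := by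
              intro x hx
              cases hxx : x with
              | inr z =>
                have hzB : z ∈ B.toRight := Finset.mem_toRight.2 (by
                  rw [← hxx]; exact Finset.mem_coe.1 hx)
                have hzBad : z ∈ Bad := by
                  rcases hB hx with ⟨n, hn, heq2⟩ | ⟨bq, hbq, heq2⟩
                  · rw [hxx] at heq2
                    exact absurd heq2 (by simp)
                  · rw [hxx] at heq2
                    rwa [show bq = z from Sum.inr_injective heq2] at hbq
                exact ⟨z, hzBad.1, by simp only [hf₂]; rw [if_pos hzBad]⟩
              | inl y =>
                have hyB : y ∈ B.toLeft := Finset.mem_toLeft.2 (by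
                  rw [← hxx]; exact Finset.mem_coe.1 hx)
                obtain ⟨a, ⟨haM, hanb⟩, rfl⟩ := hgl (Finset.mem_coe.2 hyB)
                exact ⟨a, haM, by simp only [hf₂]; rw [if_neg hanb]⟩
            refine L.memK_pullback hσne hf₂inj ?_ h₂.2 hBim hBn hBmono
            intro A hA hAn
            have := hG1 A hA hAn
            convert this using 3
          · -- mixed case: everything is χ-colored
            obtain ⟨y₀, hy₀L, hy₀n⟩ : ∃ y ∈ B.toLeft, y ∉ g₂ '' (M₂ \ Bad) := by
              by_contra hcon
              push_neg at hcon
              exact hgl fun y hy => hcon y (Finset.mem_coe.1 hy)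
            have hy₀B : Sum.inl y₀ ∈ B := Finset.mem_toLeft.1 hy₀L
            have hχeq : ∀ S : Finset σ, ↑S ⊆ insert q0 M₀ → S.Nonempty →
                c₂ S = χ S.card := by
              intro S hS hSn
              simp only [hχ]
              exact L.bad_fullmono hrich' hM₀inf hq00 hq0G hS
                (((hDsub _).trans (Set.subset_insert _ _))) hSn (by rw [hDcard])
            have hall : ∀ A : Finset (τ' ⊕ σ), A ⊆ B → A.Nonempty →
                cfin A = χ A.card := by
              intro A hAB hAn
              rcases Nat.lt_or_ge A.card 2 with hm | hm
              · have hA1 : A.card = 1 := by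
                  have := Finset.card_pos.2 hAn
                  omega
                have hstar : cfin {Sum.inr q0} = χ 1 := by
                  simp only [hcfin]
                  have h1 : ({Sum.inr q0} : Finset (τ' ⊕ σ)).toRight = {q0} := by
                    ext z; simp
                  have h2 : ({Sum.inr q0} : Finset (τ' ⊕ σ)).toLeft = ∅ := by
                    ext z; simp
                  have hcondq : ↑({Sum.inr q0} : Finset (τ' ⊕ σ)).toRight ⊆ Bad ∧
                      ↑({Sum.inr q0} : Finset (τ' ⊕ σ)).toLeft ⊆ g₂ '' (M₂ \ Bad) := by
                    rw [h1, h2]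
                    constructor
                    · intro x hx
                      rw [show x = q0 from Finset.mem_singleton.1 (Finset.mem_coe.1 hx)]
                      exact ⟨hq0M₂, hq00, hq0G⟩
                    · simp
                  rw [if_neg (by rw [h1]; simp), if_pos hcondq]
                  simp only [hP₂]
                  rw [h1, h2]
                  simp only [Finset.image_empty, Finset.union_empty]
                  have hval : c₂ ({q0} : Finset σ) = χ ({q0} : Finset σ).card :=
                    hχeq {q0} (by
                      intro x hx
                      rw [show x = q0 from Finset.mem_singleton.1 (Finset.mem_coe.1 hx)]
                      exact Set.mem_insert _ _) ⟨q0, Finset.mem_singleton_self q0⟩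
                  rw [hval, Finset.card_singleton]
                have hmm := hBmono A {Sum.inr q0} (by exact_mod_cast hAB)
                  (by
                    intro x hx
                    rw [show x = Sum.inr q0 from Finset.mem_singleton.1 (Finset.mem_coe.1 hx)]
                    exact Finset.mem_coe.2 hq0B) hAn
                  (by rw [hA1, Finset.card_singleton])
                rw [hmm, hstar, hA1]
              · obtain ⟨A', hpair, hA'B, hA'card⟩ :=
                  Finset.exists_subsuperset_card_eq
                    (s := ({Sum.inr q0, Sum.inl y₀} : Finset (τ' ⊕ σ))) (t := B)
                    (by
                      intro x hx
                      rcases Finset.mem_insert.1 hx with rfl | hx'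
                      · exact hq0B
                      · rw [Finset.mem_singleton.1 hx']
                        exact hy₀B)
                    (le_trans (Finset.card_insert_le _ _) (by simp [hm]))
                    (Finset.card_le_card hAB)
                have hstar : cfin A' = χ A'.card := by
                  simp only [hcfin]
                  have h1 : A'.toRight ≠ ∅ := by
                    intro hcon
                    have : q0 ∈ A'.toRight :=
                      Finset.mem_toRight.2 (hpair (Finset.mem_insert_self _ _))
                    rw [hcon] at this
                    exact absurd this (Finset.notMem_empty q0)
                  have h2 : ¬(↑A'.toRight ⊆ Bad ∧ ↑A'.toLeft ⊆ g₂ '' (M₂ \ Bad)) := by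
                    rintro ⟨-, hc⟩
                    refine hy₀n (hc (Finset.mem_coe.2 (Finset.mem_toLeft.2 ?_)))
                    exact hpair (Finset.mem_insert_of_mem (Finset.mem_singleton_self _))
                  rw [if_neg h1, if_neg h2]
                have hmm := hBmono A A' (by exact_mod_cast hAB) (by exact_mod_cast hA'B)
                  hAn (by rw [hA'card])
                rw [hmm, hstar, hA'card]
            have hDmono : L.Mono c₂ ↑(D B.card) := by
              intro S S' hS hS' hSn hcard
              exact L.bad_fullmono hrich' hM₀inf hq00 hq0G
                ((hS.trans (hDsub _)).trans (Set.subset_insert _ _))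
                ((hS'.trans (hDsub _)).trans (Set.subset_insert _ _)) hSn hcard
            have hDne : (D B.card).Nonempty := by
              rw [← Finset.card_pos, hDcard]
              exact Finset.card_pos.2 hBn
            obtain ⟨l, hlW, hld⟩ := h₂.2 (D B.card) ((hDsub _).trans hss₂.1) hDne hDmono
            refine ⟨l, hlW, ?_, ?_⟩
            · rw [hld.1, hDcard]
            · intro A hAB hAn
              obtain ⟨A₀, hA₀sub, hA₀card⟩ :=
                Finset.exists_subset_card_eq (s := D B.card) (n := A.card)
                  (by rw [hDcard]; exact Finset.card_le_card hAB)
              have hc0 : c₂ A₀ = χ A₀.card := by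
                refine hχeq A₀ (((Finset.coe_subset.2 hA₀sub).trans (hDsub _)).trans
                  (Set.subset_insert _ _)) ?_
                rw [← Finset.card_pos, hA₀card, Finset.card_pos]
                exact hAn
              rw [hall A hAB hAn, ← hA₀card, ← hc0]
              exact hld.2 A₀ hA₀sub (by
                rw [← Finset.card_pos, hA₀card, Finset.card_pos]
                exact hAn)
    exact ⟨τ' ⊕ σ, NN, cfin, f₁, f₂, hMemKfin, hEmbf₁, hEmbf₂, hagr, hdisj⟩
  · intro hDAP
    intro σ M₀ M₁ M₂ c₀ c₁ c₂ h₀ h₁ h₂ hk₀ hk₁ hk₂ hss₁ hss₂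
    obtain ⟨τ, NN, cc, f₁, f₂, hN, he₁, he₂, hag, -⟩ :=
      hDAP σ M₀ M₁ M₂ c₀ c₁ c₂ h₀ h₁ h₂ hk₀ hk₁ hk₂ hss₁ hss₂
    exact ⟨τ, NN, cc, f₁, f₂, hN, he₁, he₂, hag⟩
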